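/- arXiv:1410.0443 — 2 statements merged into one kernel-verified Lean document; each statement's English description precedes it below -/
import Mathlib

section
/- Stein's lemma (converse direction): for finite probability distributions P, Q on a finite set X with D(P‖Q) < ∞, and any 0 < ε < 1, limsup_{n→∞} −(1/n) log β_ε(Pⁿ, Qⁿ) ≤ D(P‖Q), where Pⁿ and Qⁿ denote n-fold i.i.d. product distributions. -/
open Finset

/-- The set of achievable type-II error probabilities for stochastic tests
with type-I error at most `ε`. -/
def betaSet {X : Type*} [Fintype X] (P Q : X → ℝ) (ε : ℝ) : Set ℝ :=
  {b | ∃ T : X → ℝ, (∀ x, 0 ≤ T x ∧ T x ≤ 1) ∧ 1 - ε ≤ ∑ x, P x * T x ∧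
    b = ∑ x, Q x * T x}

/-- The optimal type-II error `β_ε(P,Q)`. -/
noncomputable def beta {X : Type*} [Fintype X] (P Q : X → ℝ) (ε : ℝ) : ℝ :=
  sInf (betaSet P Q ε)

/-- The `n`-fold i.i.d. product distribution. -/
def prodDist {X : Type*} [Fintype X] (P : X → ℝ) (n : ℕ) : (Fin n → X) → ℝ :=
  fun xs => ∏ i, P (xs i)

/-- Kullback-Leibler divergence (natural log), with the convention `0 log(0/0) = 0`. -/
noncomputable def klDiv {X : Type*} [Fintype X] (P Q : X → ℝ) : ℝ :=
  ∑ x, if P x = 0 then 0 else P x * Real.log (P x / Q x)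

/-!
Let `L = log (P / Q)`, so that `D(P‖Q) = E_P L` and, on the support of `Pⁿ`, `log (Pⁿ / Qⁿ)` is
the sum `Sₙ` of `n` independent copies of `L`. Off the atypical set `{Sₙ > n (D + δ)}` one has
`Pⁿ ≤ e^{n (D + δ)} Qⁿ`, so a test accepting with `Pⁿ`-probability at least `1 - ε` accepts with
`Qⁿ`-probability at least `e^{-n (D + δ)} (1 - ε - Pⁿ(atypical))`. By Chebyshev,
`Pⁿ(atypical) ≤ Var_P(L) / (n δ²) → 0`, hence `β_ε(Pⁿ, Qⁿ) ≥ (1 - ε) / 2 · e^{-n (D + δ)}` for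
large `n`, and `δ > 0` is arbitrary.
-/

open Filter Topology Real

section Tests

variable {Y : Type*} [Fintype Y]

theorem sum_mul_sub_sum_filter_le_mul {p q T : Y → ℝ} {K : ℝ} (s : Y → Prop) [DecidablePred s]
    (hK : 0 ≤ K) (hp : ∀ y, 0 ≤ p y) (hq : ∀ y, 0 ≤ q y) (hT : ∀ y, 0 ≤ T y ∧ T y ≤ 1)
    (hs : ∀ y, ¬ s y → p y ≤ K * q y) :
    ∑ y, p y * T y - ∑ y with s y, p y ≤ K * ∑ y, q y * T y := by
  have hbad : ∑ y with s y, p y * T y ≤ ∑ y with s y, p y :=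
    sum_le_sum fun y _ => mul_le_of_le_one_right (hp y) (hT y).2
  calc ∑ y, p y * T y - ∑ y with s y, p y
      ≤ ∑ y with ¬ s y, p y * T y := by
        rw [← sum_filter_add_sum_filter_not univ s]
        linarith
    _ ≤ ∑ y with ¬ s y, K * q y * T y :=
        sum_le_sum fun y hy => mul_le_mul_of_nonneg_right (hs y (mem_filter.1 hy).2) (hT y).1
    _ ≤ ∑ y, K * q y * T y :=
        sum_le_sum_of_subset_of_nonneg (filter_subset _ _) fun y _ _ =>
          mul_nonneg (mul_nonneg hK (hq y)) (hT y).1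
    _ = K * ∑ y, q y * T y := by simp_rw [mul_sum, mul_assoc]

theorem one_mem_betaSet {p q : Y → ℝ} {ε : ℝ} (hp : ∑ y, p y = 1) (hq : ∑ y, q y = 1)
    (hε : 0 ≤ ε) : 1 ∈ betaSet p q ε :=
  ⟨fun _ => 1, fun _ => ⟨zero_le_one, le_rfl⟩, by simp [hp, hε], by simp [hq]⟩

theorem beta_le_one {p q : Y → ℝ} {ε : ℝ} (hp : ∑ y, p y = 1) (hq0 : ∀ y, 0 ≤ q y)
    (hq : ∑ y, q y = 1) (hε : 0 ≤ ε) : beta p q ε ≤ 1 := by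
  refine csInf_le ⟨0, ?_⟩ (one_mem_betaSet hp hq hε)
  rintro b ⟨T, hT, -, rfl⟩
  exact sum_nonneg fun y _ => mul_nonneg (hq0 y) (hT y).1

theorem div_le_beta {p q : Y → ℝ} {ε K : ℝ} (s : Y → Prop) [DecidablePred s] (hK : 0 < K)
    (hp : ∀ y, 0 ≤ p y) (hq : ∀ y, 0 ≤ q y) (hs : ∀ y, ¬ s y → p y ≤ K * q y)
    (hne : (betaSet p q ε).Nonempty) :
    (1 - ε - ∑ y with s y, p y) / K ≤ beta p q ε := by
  refine le_csInf hne ?_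
  rintro b ⟨T, hT, hTp, rfl⟩
  rw [div_le_iff₀' hK]
  linarith [sum_mul_sub_sum_filter_le_mul s hK.le hp hq hT hs]

theorem sum_filter_lt_le_sum_mul_sq_div {w Z : Y → ℝ} {a : ℝ} (hw : ∀ y, 0 ≤ w y)
    (ha : 0 < a) : ∑ y with a < Z y, w y ≤ (∑ y, w y * Z y ^ 2) / a ^ 2 := by
  rw [le_div_iff₀ (by positivity), sum_mul]
  calc ∑ y with a < Z y, w y * a ^ 2
      ≤ ∑ y with a < Z y, w y * Z y ^ 2 :=
        sum_le_sum fun y hy =>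
          mul_le_mul_of_nonneg_left (pow_le_pow_left₀ ha.le (mem_filter.1 hy).2.le 2) (hw y)
    _ ≤ ∑ y, w y * Z y ^ 2 :=
        sum_le_sum_of_subset_of_nonneg (filter_subset _ _) fun y _ _ =>
          mul_nonneg (hw y) (sq_nonneg _)

end Tests

section ProdDist

variable {X : Type*} [Fintype X] {P : X → ℝ}

theorem sum_prodDist_mul_prod (P : X → ℝ) (n : ℕ) (h : Fin n → X → ℝ) :
    ∑ xs, prodDist P n xs * ∏ i, h i (xs i) = ∏ i, ∑ x, P x * h i x := by
  classical
  simp_rw [prodDist, ← prod_mul_distrib]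
  exact (Fintype.prod_sum fun i x => P x * h i x).symm

theorem prodDist_nonneg (hP0 : ∀ x, 0 ≤ P x) (n : ℕ) (xs : Fin n → X) : 0 ≤ prodDist P n xs :=
  prod_nonneg fun i _ => hP0 (xs i)

theorem prodDist_le_exp_mul_prodDist {Q : X → ℝ} (hP0 : ∀ x, 0 ≤ P x) (hQ0 : ∀ x, 0 ≤ Q x)
    (habs : ∀ x, 0 < P x → 0 < Q x) {n : ℕ} {xs : Fin n → X} {c : ℝ}
    (h : ∑ i, log (P (xs i) / Q (xs i)) ≤ c) : prodDist P n xs ≤ exp c * prodDist Q n xs := by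
  by_cases hpos : ∀ i, 0 < P (xs i)
  · have hratio : prodDist P n xs = exp (∑ i, log (P (xs i) / Q (xs i))) * prodDist Q n xs := by
      rw [exp_sum, prodDist, prodDist, ← prod_mul_distrib]
      refine prod_congr rfl fun i _ => ?_
      rw [exp_log (div_pos (hpos i) (habs _ (hpos i))), div_mul_cancel₀ _ (habs _ (hpos i)).ne']
    rw [hratio]
    gcongr
    exact prodDist_nonneg hQ0 n xs
  · obtain ⟨i, hi⟩ := not_forall.1 hpos
    have hzero : prodDist P n xs = 0 :=
      prod_eq_zero (mem_univ i) (le_antisymm (not_lt.1 hi) (hP0 _))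
    rw [hzero]
    exact mul_nonneg (exp_pos c).le (prodDist_nonneg hQ0 n xs)

variable (hP1 : ∑ x, P x = 1)
include hP1

theorem sum_prodDist (n : ℕ) : ∑ xs, prodDist P n xs = 1 := by
  simpa [hP1] using sum_prodDist_mul_prod P n fun _ _ => 1

theorem sum_prodDist_mul_apply {n : ℕ} (i : Fin n) (h : X → ℝ) :
    ∑ xs, prodDist P n xs * h (xs i) = ∑ x, P x * h x := by
  classical
  have := sum_prodDist_mul_prod P n fun k x => if k = i then h x else 1
  simpa [mul_ite, hP1] using this

theorem sum_prodDist_mul_apply_mul_apply {n : ℕ} {i j : Fin n} (hij : i ≠ j) (h h' : X → ℝ) :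
    ∑ xs, prodDist P n xs * (h (xs i) * h' (xs j)) = (∑ x, P x * h x) * ∑ x, P x * h' x := by
  classical
  have := sum_prodDist_mul_prod P n fun k x => if k = i then h x else if k = j then h' x else 1
  simp_rw [fun xs : Fin n → X => Fintype.prod_eq_mul i j hij
    (f := fun k => if k = i then h (xs k) else if k = j then h' (xs k) else 1)
    (by simp +contextual)] at this
  rw [Fintype.prod_eq_mul i j hij
    (f := fun k => ∑ x, P x * if k = i then h x else if k = j then h' x else 1)
    (fun k hk => by simp [hk.1, hk.2, hP1])] at this
  simpa [hij.symm] using this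

theorem sum_prodDist_mul_sum_sq {g : X → ℝ} (hg : ∑ x, P x * g x = 0) (n : ℕ) :
    ∑ xs, prodDist P n xs * (∑ i, g (xs i)) ^ 2 = n * ∑ x, P x * g x ^ 2 := by
  have hcov : ∀ i j : Fin n, ∑ xs, prodDist P n xs * (g (xs i) * g (xs j)) =
      if i = j then ∑ x, P x * g x ^ 2 else 0 := by
    intro i j
    split_ifs with hij
    · subst hij
      simp_rw [← sq]
      exact sum_prodDist_mul_apply hP1 i fun x => g x ^ 2
    · rw [sum_prodDist_mul_apply_mul_apply hP1 hij, hg, zero_mul]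
  simp_rw [sq (∑ i, _), sum_mul_sum, mul_sum]
  rw [sum_comm]
  simp_rw [sum_comm (s := (univ : Finset (Fin n → X))), hcov]
  simp [mul_sum]

theorem sum_prodDist_filter_lt_le (hP0 : ∀ x, 0 ≤ P x) {g : X → ℝ} (hg : ∑ x, P x * g x = 0)
    {δ : ℝ} (hδ : 0 < δ) {n : ℕ} (hn : 0 < n) :
    ∑ xs with n * δ < ∑ i, g (xs i), prodDist P n xs ≤ (∑ x, P x * g x ^ 2) / (n * δ ^ 2) := by
  calc ∑ xs with n * δ < ∑ i, g (xs i), prodDist P n xs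
      ≤ (∑ xs, prodDist P n xs * (∑ i, g (xs i)) ^ 2) / (n * δ) ^ 2 :=
        sum_filter_lt_le_sum_mul_sq_div (prodDist_nonneg hP0 n) (by positivity)
    _ = (∑ x, P x * g x ^ 2) / (n * δ ^ 2) := by
        rw [sum_prodDist_mul_sum_sq hP1 hg]
        field_simp

end ProdDist

theorem klDiv_eq_sum_mul_log {X : Type*} [Fintype X] (P Q : X → ℝ) :
    klDiv P Q = ∑ x, P x * log (P x / Q x) :=
  sum_congr rfl fun x _ => by split_ifs with h <;> simp [h]

theorem eventually_le_beta_prodDist {X : Type*} [Fintype X] {P Q : X → ℝ}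
    (hP0 : ∀ x, 0 ≤ P x) (hP1 : ∑ x, P x = 1) (hQ0 : ∀ x, 0 ≤ Q x) (hQ1 : ∑ x, Q x = 1)
    (habs : ∀ x, 0 < P x → 0 < Q x) {ε : ℝ} (hε0 : 0 ≤ ε) (hε1 : ε < 1) {δ : ℝ} (hδ : 0 < δ) :
    ∀ᶠ n : ℕ in atTop,
      (1 - ε) / 2 * exp (-(n * (klDiv P Q + δ))) ≤ beta (prodDist P n) (prodDist Q n) ε := by
  set D := klDiv P Q
  set g : X → ℝ := fun x => log (P x / Q x) - D
  have hg : ∑ x, P x * g x = 0 := by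
    simp only [g, mul_sub, sum_sub_distrib, ← sum_mul, hP1, D, klDiv_eq_sum_mul_log]
    ring
  have hsmall : Tendsto (fun n : ℕ => (∑ x, P x * g x ^ 2) / (n * δ ^ 2)) atTop (𝓝 0) :=
    tendsto_const_nhds.div_atTop (tendsto_natCast_atTop_atTop.atTop_mul_const (by positivity))
  filter_upwards [hsmall.eventually_le_const (by linarith : 0 < (1 - ε) / 2),
    eventually_gt_atTop 0] with n hM hn
  have htypical : ∀ xs : Fin n → X, ¬ n * δ < ∑ i, g (xs i) →
      prodDist P n xs ≤ exp (n * (D + δ)) * prodDist Q n xs := by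
    intro xs hxs
    refine prodDist_le_exp_mul_prodDist hP0 hQ0 habs ?_
    simp only [g, sum_sub_distrib, sum_const, card_univ, Fintype.card_fin, nsmul_eq_mul] at hxs
    linarith
  have hbeta := div_le_beta _ (exp_pos _) (prodDist_nonneg hP0 n) (prodDist_nonneg hQ0 n)
    htypical ⟨1, one_mem_betaSet (sum_prodDist hP1 n) (sum_prodDist hQ1 n) hε0⟩
  have hbad := sum_prodDist_filter_lt_le hP1 hP0 hg hδ hn
  calc (1 - ε) / 2 * exp (-(n * (D + δ))) = (1 - ε) / 2 / exp (n * (D + δ)) := by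
        rw [exp_neg, div_eq_mul_inv _ (exp _)]
    _ ≤ _ := by gcongr; linarith
    _ ≤ _ := hbeta

theorem limsup_neg_inv_mul_log_le {b : ℕ → ℝ} {D : ℝ} (hb1 : ∀ n, b n ≤ 1)
    (h : ∀ δ > 0, ∃ c > 0, ∀ᶠ n : ℕ in atTop, c * exp (-(n * (D + δ))) ≤ b n) :
    limsup (fun n : ℕ => -(1 / (n : ℝ)) * log (b n)) atTop ≤ D := by
  refine le_of_forall_pos_le_add fun δ hδ => ?_
  obtain ⟨c, hc, hb⟩ := h (δ / 2) (half_pos hδ)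
  have hconst : Tendsto (fun n : ℕ => -log c / n) atTop (𝓝 0) :=
    tendsto_const_nhds.div_atTop tendsto_natCast_atTop_atTop
  have hu : ∀ᶠ n : ℕ in atTop,
      0 ≤ -(1 / (n : ℝ)) * log (b n) ∧ -(1 / (n : ℝ)) * log (b n) ≤ D + δ := by
    filter_upwards [hb, hconst.eventually_le_const (half_pos hδ), eventually_gt_atTop 0]
      with n hbn hcn hn
    have hlog : log c - n * (D + δ / 2) ≤ log (b n) := by
      calc log c - n * (D + δ / 2) = log (c * exp (-(n * (D + δ / 2)))) := by
            rw [log_mul hc.ne' (exp_pos _).ne', log_exp]; ring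
        _ ≤ log (b n) := log_le_log (by positivity) hbn
    have hlog_nonpos : log (b n) ≤ 0 := log_nonpos (le_trans (by positivity) hbn) (hb1 n)
    have hn' : (0 : ℝ) < n := Nat.cast_pos.2 hn
    constructor
    · have : 0 ≤ 1 / (n : ℝ) := by positivity
      nlinarith
    · have : -(1 / (n : ℝ)) * (log c - n * (D + δ / 2)) = -log c / n + (D + δ / 2) := by
        field_simp; ring
      nlinarith [mul_le_mul_of_nonpos_left hlog (neg_nonpos.2 (le_of_lt (one_div_pos.2 hn')))]
  exact limsup_le_of_le (isCoboundedUnder_le_of_eventually_le _ (hu.mono fun _ h => h.1))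
    (hu.mono fun _ h => h.2)

/-- Stein's lemma, converse direction:
`limsup_n -(1/n) log β_ε(Pⁿ, Qⁿ) ≤ D(P‖Q)`. -/
theorem stein_converse {X : Type*} [Fintype X] (P Q : X → ℝ)
    (hP0 : ∀ x, 0 ≤ P x) (hP1 : ∑ x, P x = 1)
    (hQ0 : ∀ x, 0 ≤ Q x) (hQ1 : ∑ x, Q x = 1)
    (habs : ∀ x, 0 < P x → 0 < Q x)
    {ε : ℝ} (hε0 : 0 < ε) (hε1 : ε < 1) :
    Filter.limsup
      (fun n : ℕ => -(1 / (n : ℝ)) * Real.log (beta (prodDist P n) (prodDist Q n) ε))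
      Filter.atTop ≤ klDiv P Q :=
  limsup_neg_inv_mul_log_le
    (fun n => beta_le_one (sum_prodDist hP1 n) (prodDist_nonneg hQ0 n) (sum_prodDist hQ1 n)
      hε0.le)
    fun _ hδ => ⟨(1 - ε) / 2, by linarith,
      eventually_le_beta_prodDist hP0 hP1 hQ0 hQ1 habs hε0.le hε1 hδ⟩
end

section
/- Conditional independence preservation, general interactive case: suppose random variables (A, B, C) on finite sets satisfy A ⊥ B | C. Let F be an interactive communication: F = (F₁,…,F_r) with F_i a deterministic function of (A, F^{i−1}) for odd i and of (B, F^{i−1}) for even i. Then A ⊥ B | (C, F), i.e., I(A ∧ B | C, F) = 0. -/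
open Finset

/-- Conditional mutual information `I(A ∧ B | C)` of a joint pmf `p` on `A × B × C`
(natural log, with `0 log(0/0) = 0` conventions). -/
noncomputable def condMI {A B C : Type*} [Fintype A] [Fintype B] [Fintype C]
    (p : A → B → C → ℝ) : ℝ :=
  ∑ a, ∑ b, ∑ c, if p a b c = 0 then 0 else
    p a b c * Real.log ((p a b c * ∑ a', ∑ b', p a' b' c) /
      ((∑ b', p a b' c) * (∑ a', p a' b c)))

open Real InformationTheory

/-! By Gibbs' inequality, `I(A ∧ B | C) = 0` forces `p(a,b,c) = p(a,c) p(b,c) / p(c)`, so every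
slice `(p a b c)_{a,b}` has rank at most one, i.e. all its `2 × 2` minors vanish; conversely
vanishing minors give `I = 0`. The fibres of an interactive transcript are combinatorial
rectangles, by induction on the round: whoever speaks next sees the same past and their own
input. Conditioning on the transcript multiplies each slice by the indicator of a rectangle,
which again has vanishing minors, and vanishing minors survive pointwise products. -/

lemma mul_log_div_sub_sub_eq_mul_klFun (w : ℝ) {q : ℝ} (hq : q ≠ 0) :
    w * log (w / q) - (w - q) = q * klFun (w / q) := by
  rw [klFun_apply]
  field_simp
  ring

section Gibbs

variable {ι : Type*} [Fintype ι] {w q : ι → ℝ}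

lemma sum_mul_log_div_eq_sum_mul_klFun (hsupp : ∀ i, q i = 0 → w i = 0)
    (hsum : ∑ i, w i = ∑ i, q i) :
    ∑ i, w i * log (w i / q i) = ∑ i, q i * klFun (w i / q i) := by
  have hterm : ∀ i, w i * log (w i / q i) - (w i - q i) = q i * klFun (w i / q i) := by
    intro i
    by_cases hqi : q i = 0
    · simp [hqi, hsupp i hqi]
    · exact mul_log_div_sub_sub_eq_mul_klFun (w i) hqi
  rw [← sum_congr rfl fun i _ => hterm i, sum_sub_distrib, sum_sub_distrib,
    hsum, sub_self, sub_zero]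

lemma eq_of_sum_mul_log_div_eq_zero (hw : ∀ i, 0 ≤ w i) (hq : ∀ i, 0 ≤ q i)
    (hsupp : ∀ i, q i = 0 → w i = 0) (hsum : ∑ i, w i = ∑ i, q i)
    (h : ∑ i, w i * log (w i / q i) = 0) (i : ι) : w i = q i := by
  rw [sum_mul_log_div_eq_sum_mul_klFun hsupp hsum, sum_eq_zero_iff_of_nonneg
    fun j _ => mul_nonneg (hq j) (klFun_nonneg (div_nonneg (hw j) (hq j)))] at h
  rcases eq_or_ne (q i) 0 with hqi | hqi
  · rw [hqi, hsupp i hqi]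
  · have := (mul_eq_zero.mp (h i (mem_univ i))).resolve_left hqi
    rw [klFun_eq_zero_iff (div_nonneg (hw i) (hq i)), div_eq_one_iff_eq hqi] at this
    exact this

end Gibbs

section Minors

variable {A B C : Type*}

def HasVanishingMinors (p : A → B → C → ℝ) : Prop :=
  ∀ a a' b b' c, p a b' c * p a' b c = p a b c * p a' b' c

lemma HasVanishingMinors.mul {p q : A → B → C → ℝ} (hp : HasVanishingMinors p)
    (hq : HasVanishingMinors q) : HasVanishingMinors fun a b c => p a b c * q a b c := by
  intro a a' b b' c
  linear_combination q a b' c * q a' b c * hp a a' b b' c + p a b c * p a' b' c * hq a a' b b' c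

lemma HasVanishingMinors.comp {C' : Type*} {p : A → B → C → ℝ} (hp : HasVanishingMinors p)
    (g : C' → C) : HasVanishingMinors fun a b c => p a b (g c) :=
  fun a a' b b' c => hp a a' b b' (g c)

variable [Fintype A] [Fintype B] [Fintype C]

lemma condMI_eq_zero_of_hasVanishingMinors {p : A → B → C → ℝ} (hp : HasVanishingMinors p) :
    condMI p = 0 := by
  refine sum_eq_zero fun a _ => sum_eq_zero fun b _ =>
    sum_eq_zero fun c _ => ?_
  have hmarg : (∑ b', p a b' c) * ∑ a', p a' b c = p a b c * ∑ a', ∑ b', p a' b' c := by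
    rw [sum_mul_sum, sum_comm]
    simp only [mul_sum, hp a]
  rw [hmarg]
  rcases eq_or_ne (p a b c * ∑ a', ∑ b', p a' b' c) 0 with h | h
  · simp [h]
  · simp [div_self h]

lemma eq_div_of_condMI_eq_zero {p : A → B → C → ℝ} (hp0 : ∀ a b c, 0 ≤ p a b c)
    (hCI : condMI p = 0) (a : A) (b : B) (c : C) :
    p a b c = (∑ b', p a b' c) * (∑ a', p a' b c) / ∑ a', ∑ b', p a' b' c := by
  set pA : A → C → ℝ := fun a c => ∑ b', p a b' c
  set pB : B → C → ℝ := fun b c => ∑ a', p a' b c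
  set pC : C → ℝ := fun c => ∑ a', ∑ b', p a' b' c
  set q : A → B → C → ℝ := fun a b c => pA a c * pB b c / pC c
  have hpA : ∀ a b c, p a b c ≤ pA a c := fun a b c =>
    single_le_sum (fun b' _ => hp0 a b' c) (mem_univ b)
  have hpB : ∀ a b c, p a b c ≤ pB b c := fun a b c =>
    single_le_sum (fun a' _ => hp0 a' b c) (mem_univ a)
  have hpC : ∀ a b c, p a b c ≤ pC c := fun a b c =>
    (hpA a b c).trans (single_le_sum (f := fun a' => pA a' c)
      (fun a' _ => sum_nonneg fun b' _ => hp0 a' b' c) (mem_univ a))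
  have hq0 : ∀ a b c, 0 ≤ q a b c := fun a b c =>
    div_nonneg (mul_nonneg (sum_nonneg fun _ _ => hp0 _ _ _) (sum_nonneg fun _ _ => hp0 _ _ _))
      (sum_nonneg fun _ _ => sum_nonneg fun _ _ => hp0 _ _ _)
  have hsupp : ∀ a b c, q a b c = 0 → p a b c = 0 := by
    intro a b c h
    rcases div_eq_zero_iff.mp h with h | h
    · rcases mul_eq_zero.mp h with h | h
      · exact le_antisymm (h ▸ hpA a b c) (hp0 a b c)
      · exact le_antisymm (h ▸ hpB a b c) (hp0 a b c)
    · exact le_antisymm (h ▸ hpC a b c) (hp0 a b c)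
  have hsum : ∑ a, ∑ b, ∑ c, p a b c = ∑ a, ∑ b, ∑ c, q a b c := by
    rw [sum_comm_cycle, sum_comm_cycle (f := q)]
    refine sum_congr rfl fun c _ => ?_
    have hB : ∑ b, pB b c = pC c := sum_comm
    simp only [q, ← sum_div, ← mul_sum, ← sum_mul, hB]
    exact (mul_self_div_self (pC c)).symm
  have hlog : ∑ a, ∑ b, ∑ c, p a b c * log (p a b c / q a b c) = 0 := by
    rw [← hCI, condMI]
    refine sum_congr rfl fun a _ => sum_congr rfl fun b _ => sum_congr rfl fun c _ => ?_
    rw [div_div_eq_mul_div]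
    split_ifs with h <;> simp [h, pA, pB, pC]
  simp only [← Fintype.sum_prod_type'] at hsum hlog
  exact eq_of_sum_mul_log_div_eq_zero (fun _ => hp0 _ _ _) (fun _ => hq0 _ _ _)
    (fun _ => hsupp _ _ _) hsum hlog (a, b, c)

lemma hasVanishingMinors_of_condMI_eq_zero {p : A → B → C → ℝ} (hp0 : ∀ a b c, 0 ≤ p a b c)
    (hCI : condMI p = 0) : HasVanishingMinors p := by
  intro a a' b b' c
  rw [eq_div_of_condMI_eq_zero hp0 hCI a b', eq_div_of_condMI_eq_zero hp0 hCI a' b,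
    eq_div_of_condMI_eq_zero hp0 hCI a b, eq_div_of_condMI_eq_zero hp0 hCI a' b']
  ring

end Minors

section Rectangles

variable {A B T : Type*}

/-- Every fibre of `τ` is a combinatorial rectangle. -/
def IsRectangular (τ : A → B → T) : Prop :=
  ∀ a a' b b', τ a b = τ a' b' → τ a b' = τ a b

lemma IsRectangular.hasVanishingMinors_indicator [DecidableEq T] {τ : A → B → T}
    (hτ : IsRectangular τ) :
    HasVanishingMinors fun a b (f : T) => if τ a b = f then (1 : ℝ) else 0 := by
  intro a a' b b' f
  have hswap : (τ a b' = f ∧ τ a' b = f) ↔ (τ a b = f ∧ τ a' b' = f) := by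
    constructor
    · rintro ⟨h₁, h₂⟩
      exact ⟨(hτ a a' b' b (h₁.trans h₂.symm)).trans h₁,
        (hτ a' a b b' (h₂.trans h₁.symm)).trans h₂⟩
    · rintro ⟨h₁, h₂⟩
      exact ⟨(hτ a a' b b' (h₁.trans h₂.symm)).trans h₁,
        (hτ a' a b' b (h₂.trans h₁.symm)).trans h₂⟩
  simp only [ite_zero_mul_ite_zero, one_mul, hswap]

/-- Round `i`, counted from `0`, is computed from the earlier rounds by the holder of `a` when `i`
is even and by the holder of `b` when `i` is odd. -/
def IsInteractiveTranscript {M : Type*} {r : ℕ} (t : A → B → Fin r → M) : Prop :=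
  ∀ i : Fin r,
    (i.val % 2 = 0 →
      ∃ g : A → (Fin r → M) → M,
        (∀ a h₁ h₂, (∀ j : Fin r, j < i → h₁ j = h₂ j) → g a h₁ = g a h₂) ∧
        ∀ a b, t a b i = g a (t a b)) ∧
    (i.val % 2 = 1 →
      ∃ g : B → (Fin r → M) → M,
        (∀ b h₁ h₂, (∀ j : Fin r, j < i → h₁ j = h₂ j) → g b h₁ = g b h₂) ∧
        ∀ a b, t a b i = g b (t a b))

lemma IsInteractiveTranscript.isRectangular {M : Type*} {r : ℕ} {t : A → B → Fin r → M}
    (ht : IsInteractiveTranscript t) : IsRectangular t := by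
  intro a a' b b' h
  funext j
  induction j using WellFoundedLT.induction with
  | _ j ih =>
    rcases Nat.mod_two_eq_zero_or_one j.val with hj | hj
    · obtain ⟨g, hg, hgt⟩ := (ht j).1 hj
      rw [hgt a b', hgt a b]
      exact hg a _ _ ih
    · obtain ⟨g, hg, hgt⟩ := (ht j).2 hj
      calc t a b' j = g b' (t a b') := hgt a b'
        _ = g b' (t a' b') := hg b' _ _ fun k hk => (ih k hk).trans (congrFun h k)
        _ = t a b j := ((congrFun h j).trans (hgt a' b')).symm

end Rectangles

theorem interactive_communication_preserves_CI_general
    {A B C M : Type*} [Fintype A] [Fintype B] [Fintype C] [Fintype M]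
    [DecidableEq M] {r : ℕ}
    (p : A → B → C → ℝ)
    (hp0 : ∀ a b c, 0 ≤ p a b c)
    (hCI : condMI p = 0)
    (t : A → B → Fin r → M)
    (hInteractive : ∀ i : Fin r,
      (i.val % 2 = 0 →
        ∃ g : A → (Fin r → M) → M,
          (∀ a h₁ h₂, (∀ j : Fin r, j < i → h₁ j = h₂ j) → g a h₁ = g a h₂) ∧
          ∀ a b, t a b i = g a (t a b)) ∧
      (i.val % 2 = 1 →
        ∃ g : B → (Fin r → M) → M,
          (∀ b h₁ h₂, (∀ j : Fin r, j < i → h₁ j = h₂ j) → g b h₁ = g b h₂) ∧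
          ∀ a b, t a b i = g b (t a b))) :
    condMI (fun (a : A) (b : B) (cf : C × (Fin r → M)) =>
      if t a b = cf.2 then p a b cf.1 else 0) = 0 := by
  have hp : HasVanishingMinors p := hasVanishingMinors_of_condMI_eq_zero hp0 hCI
  have ht : IsRectangular t := IsInteractiveTranscript.isRectangular hInteractive
  apply condMI_eq_zero_of_hasVanishingMinors
  simpa only [boole_mul] using
    (ht.hasVanishingMinors_indicator.comp Prod.snd).mul (hp.comp Prod.fst)

/-- Conditional independence is preserved under general interactive communication:
if `A ⊥ B | C` and `F = (F₁, …, F_r)` is an interactive transcript, where `F_i`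
is a deterministic function of `(A, F^{i-1})` for odd `i` (0-based even indices)
and of `(B, F^{i-1})` for even `i`, then `I(A ∧ B | C, F) = 0`. -/
theorem interactive_communication_preserves_CI
    {A B C M : Type*} [Fintype A] [Fintype B] [Fintype C] [Fintype M]
    [DecidableEq M] {r : ℕ}
    (p : A → B → C → ℝ)
    (hp0 : ∀ a b c, 0 ≤ p a b c) (hp1 : ∑ a, ∑ b, ∑ c, p a b c = 1)
    (hCI : condMI p = 0)
    (t : A → B → Fin r → M)
    (hInteractive : ∀ i : Fin r,
      (i.val % 2 = 0 →
        ∃ g : A → (Fin r → M) → M,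
          (∀ a h₁ h₂, (∀ j : Fin r, j < i → h₁ j = h₂ j) → g a h₁ = g a h₂) ∧
          ∀ a b, t a b i = g a (t a b)) ∧
      (i.val % 2 = 1 →
        ∃ g : B → (Fin r → M) → M,
          (∀ b h₁ h₂, (∀ j : Fin r, j < i → h₁ j = h₂ j) → g b h₁ = g b h₂) ∧
          ∀ a b, t a b i = g b (t a b))) :
    condMI (fun (a : A) (b : B) (cf : C × (Fin r → M)) =>
      if t a b = cf.2 then p a b cf.1 else 0) = 0 :=
  interactive_communication_preserves_CI_general p hp0 hCI t hInteractive
end
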